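/- arXiv:1503.02461 — 5 statements merged into one kernel-verified Lean document; each statement's English description precedes it below -/
import Mathlib

section
/- Let k be a perfect field of characteristic p > 0. Then the module of Kähler differentials Ω¹_{k[[t]]/k} is a free k[[t]]-module of rank one generated by dt; equivalently, the natural map from Ω¹_{k[[t]]/k} to the module of t-adically continuous differentials k[[t]]·dt is an isomorphism. -/
open PowerSeries

section Aux

variable {k : Type*} [Field k] (p : ℕ) [Fact p.Prime] [CharP k p]

lemma powerSeries_charP : CharP (PowerSeries k) p :=
  charP_of_injective_ringHom (PowerSeries.C_injective) p

/-- Frobenius coefficient formula for power series over a field of char `p`. -/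
lemma coeff_pow_char (f : PowerSeries k) (n : ℕ) :
    PowerSeries.coeff n (f ^ p) =
      if p ∣ n then (PowerSeries.coeff (n / p) f) ^ p else 0 := by
  have hp : 0 < p := (Fact.out : p.Prime).pos
  have h1 : PowerSeries.coeff n (f ^ p) =
      PowerSeries.coeff n ((trunc (n + 1) f : PowerSeries k) ^ p) := by
    rw [← coeff_coe_trunc_of_lt (Nat.lt_succ_self n) (f := f ^ p),
      ← trunc_trunc_pow f (n + 1) p,
      coeff_coe_trunc_of_lt (Nat.lt_succ_self n)]
  have h2 : ((trunc (n + 1) f : PowerSeries k) ^ p)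
      = (((trunc (n + 1) f) ^ p : Polynomial k) : PowerSeries k) := by
    push_cast; ring
  rw [h1, h2, Polynomial.coeff_coe]
  rw [← Polynomial.map_frobenius_expand, Polynomial.coeff_map, Polynomial.coeff_expand hp]
  split_ifs with h
  · rw [frobenius_def, PowerSeries.coeff_trunc, if_pos (Nat.lt_succ_of_le (Nat.div_le_self n p))]
  · exact map_zero (frobenius k p)

variable [PerfectRing k p]

/-- Every power series decomposes as `∑_{i<p} gᵢ^p * X^i`. -/
lemma powerSeries_decomp (f : PowerSeries k) :
    ∃ g : ℕ → PowerSeries k,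
      f = ∑ i ∈ Finset.range p, (g i) ^ p * PowerSeries.X ^ i := by
  have hp : 0 < p := (Fact.out : p.Prime).pos
  refine ⟨fun i => PowerSeries.mk
    (fun m => (frobeniusEquiv k p).symm (PowerSeries.coeff (p * m + i) f)), ?_⟩
  ext n
  rw [map_sum]
  have hkey : n - n % p = p * (n / p) :=
    (Nat.sub_eq_iff_eq_add (Nat.mod_le n p)).mpr (Nat.div_add_mod n p).symm
  rw [Finset.sum_eq_single (n % p)]
  · rw [PowerSeries.coeff_mul_X_pow', if_pos (Nat.mod_le n p),
      coeff_pow_char, if_pos ⟨n / p, hkey⟩]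
    rw [PowerSeries.coeff_mk, ← frobenius_def, frobenius_apply_frobeniusEquiv_symm]
    congr 2
    rw [hkey, Nat.mul_div_cancel_left _ hp]
    exact (Nat.div_add_mod n p).symm
  · intro i hi hne
    rw [Finset.mem_range] at hi
    rw [PowerSeries.coeff_mul_X_pow']
    split_ifs with hle
    · have hnd : ¬ p ∣ (n - i) := by
        rintro ⟨c, hc⟩
        apply hne
        have hn : n = i + p * c := by omega
        rw [hn, Nat.add_mul_mod_self_left, Nat.mod_eq_of_lt hi]
      rw [coeff_pow_char, if_neg hnd]
    · rfl
  · intro h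
    exact absurd (Finset.mem_range.mpr (Nat.mod_lt n hp)) h

end Aux

set_option maxHeartbeats 1000000

/-- For a perfect field `k` of characteristic `p > 0`, the module of Kähler differentials
`Ω¹_{k[[t]]/k}` is a free `k[[t]]`-module of rank one generated by `dt`. -/
theorem kaehlerDifferential_powerSeries_free
    {k : Type*} [Field k] (p : ℕ) [Fact p.Prime] [CharP k p] [PerfectRing k p] :
    ∃ b : Module.Basis (Fin 1) (PowerSeries k) (KaehlerDifferential k (PowerSeries k)),
      b 0 = KaehlerDifferential.D k (PowerSeries k) PowerSeries.X := by
  haveI : CharP (PowerSeries k) p := powerSeries_charP p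
  set A := PowerSeries k
  set Ω := KaehlerDifferential k A
  set dt : Ω := KaehlerDifferential.D k A PowerSeries.X with hdt
  -- Step 1: every `D f` lies in the span of `dt`.
  have hspan : ∀ f : A, KaehlerDifferential.D k A f ∈ Submodule.span A {dt} := by
    intro f
    obtain ⟨g, hg⟩ := powerSeries_decomp p f
    rw [hg, map_sum]
    apply Submodule.sum_mem
    intro i _
    rw [Derivation.leibniz]
    apply Submodule.add_mem
    · rw [Derivation.leibniz_pow]
      apply Submodule.smul_mem
      apply Submodule.smul_of_tower_mem
      apply Submodule.smul_mem
      exact Submodule.mem_span_singleton_self dt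
    · rw [Derivation.leibniz_pow]
      have hz : p • (g i) ^ (p - 1) • KaehlerDifferential.D k A (g i) = 0 := by
        rw [← Nat.cast_smul_eq_nsmul A, CharP.cast_eq_zero, zero_smul]
      rw [hz, smul_zero]
      exact Submodule.zero_mem _
  -- Step 2: the retraction coming from the formal derivative.
  set φ : Ω →ₗ[A] A := (PowerSeries.derivative k).liftKaehlerDifferential with hφ
  have hφdt : φ dt = 1 := by
    rw [hφ, hdt, Derivation.liftKaehlerDifferential_comp_D]
    exact PowerSeries.derivative_X
  -- Step 3: every element of `Ω` equals `φ ω • dt`.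
  have hall : ∀ ω : Ω, φ ω • dt = ω := by
    have htop : Submodule.span A {dt} = ⊤ := by
      rw [eq_top_iff, ← KaehlerDifferential.span_range_derivation k A,
        Submodule.span_le]
      rintro _ ⟨f, rfl⟩
      exact hspan f
    intro ω
    have : ω ∈ Submodule.span A {dt} := htop ▸ Submodule.mem_top
    obtain ⟨c, rfl⟩ := Submodule.mem_span_singleton.mp this
    rw [map_smul, hφdt, smul_eq_mul, mul_one]
  -- Step 4: build the linear equivalence and the basis.
  let e : A ≃ₗ[A] Ω :=
    { toFun := fun a => a • dt
      map_add' := fun a b => add_smul a b dt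
      map_smul' := fun a b => by simp [mul_smul]
      invFun := φ
      left_inv := fun a => by simp [hφdt]
      right_inv := fun ω => hall ω }
  refine ⟨(Module.Basis.singleton (Fin 1) A).map e, ?_⟩
  simp [e, Module.Basis.singleton]
end

section
/- Let V be a discrete valuation ring with uniformiser π and A a flat V-algebra. Let I = ker(A ⊗_V A → A), and set A^{(2)} = (A ⊗_V A)/I², A_n^{(2)} = (A_n ⊗_{V_n} A_n)/I_n² where A_n = A/π^{n+1}A, V_n = V/π^{n+1}, I_n = ker(A_n ⊗_{V_n} A_n → A_n). Then the natural map A^{(2)} ⊗_V V_n → A_n^{(2)} is an isomorphism, and consequently the natural map (I/I²) ⊗_V V_n → I_n/I_n² is an isomorphism for every n. -/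
open TensorProduct
set_option synthInstance.maxHeartbeats 1000000
set_option maxHeartbeats 8000000

/-- For a DVR `V` with uniformiser `π` and a flat `V`-algebra `A`, write `B = A ⊗_V A`,
`I = ker(B → A)`, `A⁽²⁾ = B/I²`, and mod-`π^(n+1)` versions `Bₙ = B/π^(n+1)B`,
`Iₙ = I·Bₙ`, `Aₙ⁽²⁾ = Bₙ/Iₙ²`. Then the natural maps
`A⁽²⁾ ⊗_V V/π^(n+1) → Aₙ⁽²⁾` and `(I/I²) ⊗_V V/π^(n+1) → Iₙ/Iₙ²` are isomorphisms. -/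
theorem infinitesimal_neighbourhood_base_change
    {V A : Type*} [CommRing V] [IsDomain V] [IsDiscreteValuationRing V]
    (π : V) (hπ : Irreducible π)
    [CommRing A] [Algebra V A] [Module.Flat V A] (n : ℕ)
    (J : Ideal V) (hJ : J = Ideal.span {π ^ (n + 1)})
    (I : Ideal (A ⊗[V] A))
    (hI : I = RingHom.ker (Algebra.TensorProduct.lmul' V (S := A) : A ⊗[V] A →+* A))
    (JB : Ideal (A ⊗[V] A)) (hJB : JB = J.map (algebraMap V (A ⊗[V] A)))
    (In : Ideal ((A ⊗[V] A) ⧸ JB)) (hIn : In = I.map (Ideal.Quotient.mk JB)) :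
    (∃ e : (((A ⊗[V] A) ⧸ (I ^ 2)) ⊗[V] (V ⧸ J)) ≃ₗ[V]
        (((A ⊗[V] A) ⧸ JB) ⧸ (In ^ 2)),
      ∀ (x : A ⊗[V] A) (v : V),
        e ((Ideal.Quotient.mk (I ^ 2) x) ⊗ₜ[V] (Ideal.Quotient.mk J v)) =
          Ideal.Quotient.mk (In ^ 2) (Ideal.Quotient.mk JB (v • x))) ∧
    (∃ e' : ((I ⧸ Submodule.comap (Submodule.subtype (I : Submodule (A ⊗[V] A) (A ⊗[V] A)))
            (I ^ 2 : Ideal (A ⊗[V] A))) ⊗[V] (V ⧸ J)) ≃ₗ[V]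
        (In ⧸ Submodule.comap
            (Submodule.subtype (In : Submodule ((A ⊗[V] A) ⧸ JB) ((A ⊗[V] A) ⧸ JB)))
            (In ^ 2 : Ideal ((A ⊗[V] A) ⧸ JB))),
      ∀ (x : A ⊗[V] A) (hx : x ∈ I) (v : V),
        e' ((Submodule.Quotient.mk ⟨x, hx⟩) ⊗ₜ[V] (Ideal.Quotient.mk J v)) =
          Submodule.Quotient.mk ⟨Ideal.Quotient.mk JB (v • x),
            hIn ▸ Ideal.mem_map_of_mem _ (I.smul_of_tower_mem v hx)⟩) := by
  classical
  have hIn2 : In ^ 2 = (I ^ 2).map (Ideal.Quotient.mk JB) := by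
    rw [hIn, Ideal.map_pow]
  constructor
  · -- Part 1
    have halg : (algebraMap V ((A ⊗[V] A) ⧸ (I ^ 2)))
        = (Ideal.Quotient.mk (I ^ 2)).comp (algebraMap V (A ⊗[V] A)) := rfl
    have hK' : J.map (algebraMap V ((A ⊗[V] A) ⧸ (I ^ 2)))
        = JB.map (Ideal.Quotient.mkₐ V (I ^ 2)) := by
      have h0 : JB.map (Ideal.Quotient.mkₐ V (I ^ 2))
          = JB.map (Ideal.Quotient.mk (I ^ 2)) := rfl
      rw [h0, hJB, Ideal.map_map, halg]
    have hIn2' : (I ^ 2).map (Ideal.Quotient.mkₐ V JB) = In ^ 2 := by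
      have h0 : (I ^ 2).map (Ideal.Quotient.mkₐ V JB)
          = (I ^ 2).map (Ideal.Quotient.mk JB) := rfl
      rw [h0, hIn2]
    obtain ⟨e1, He1⟩ : ∃ e : (((A ⊗[V] A) ⧸ (I ^ 2)) ⊗[V] (V ⧸ J)) ≃ₗ[V]
        (((A ⊗[V] A) ⧸ (I ^ 2)) ⧸ (J • (⊤ : Submodule V ((A ⊗[V] A) ⧸ (I ^ 2))))),
        ∀ (m : (A ⊗[V] A) ⧸ (I ^ 2)) (v : V),
          e (m ⊗ₜ[V] Ideal.Quotient.mk J v) = Submodule.Quotient.mk (v • m) :=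
      ⟨tensorQuotEquivQuotSMul _ J, fun m v => tensorQuotEquivQuotSMul_tmul_mk J m v⟩
    obtain ⟨e2, He2⟩ : ∃ e : (((A ⊗[V] A) ⧸ (I ^ 2)) ⧸
          (J • (⊤ : Submodule V ((A ⊗[V] A) ⧸ (I ^ 2))))) ≃ₗ[V]
        (((A ⊗[V] A) ⧸ (I ^ 2)) ⧸
          (Submodule.restrictScalars V (J.map (algebraMap V ((A ⊗[V] A) ⧸ (I ^ 2)))))),
        ∀ (m : (A ⊗[V] A) ⧸ (I ^ 2)),
          e (Submodule.Quotient.mk m) = Submodule.Quotient.mk m :=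
      ⟨Submodule.quotEquivOfEq _ _ (Ideal.smul_top_eq_map J),
        fun m => Submodule.quotEquivOfEq_mk _ _ _ m⟩
    obtain ⟨e3, He3⟩ : ∃ e : (((A ⊗[V] A) ⧸ (I ^ 2)) ⧸
          (Submodule.restrictScalars V (J.map (algebraMap V ((A ⊗[V] A) ⧸ (I ^ 2)))))) ≃ₗ[V]
        (((A ⊗[V] A) ⧸ (I ^ 2)) ⧸ (J.map (algebraMap V ((A ⊗[V] A) ⧸ (I ^ 2))))),
        ∀ (m : (A ⊗[V] A) ⧸ (I ^ 2)),
          e (Submodule.Quotient.mk m) = Ideal.Quotient.mk _ m :=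
      ⟨Submodule.Quotient.restrictScalarsEquiv V _,
        fun m => Submodule.Quotient.restrictScalarsEquiv_mk V _ m⟩
    obtain ⟨e4, He4⟩ : ∃ e : (((A ⊗[V] A) ⧸ (I ^ 2)) ⧸
          (J.map (algebraMap V ((A ⊗[V] A) ⧸ (I ^ 2))))) ≃ₗ[V]
        (((A ⊗[V] A) ⧸ (I ^ 2)) ⧸ (JB.map (Ideal.Quotient.mkₐ V (I ^ 2)))),
        ∀ (m : (A ⊗[V] A) ⧸ (I ^ 2)),
          e (Ideal.Quotient.mk _ m) = Ideal.Quotient.mk _ m :=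
      ⟨(Ideal.quotientEquivAlgOfEq V hK').toLinearEquiv,
        fun m => Ideal.quotientEquivAlgOfEq_mk V hK' m⟩
    obtain ⟨e5, He5⟩ : ∃ e : (((A ⊗[V] A) ⧸ (I ^ 2)) ⧸
          (JB.map (Ideal.Quotient.mkₐ V (I ^ 2)))) ≃ₗ[V]
        ((A ⊗[V] A) ⧸ ((I ^ 2) ⊔ JB)),
        ∀ (z : A ⊗[V] A),
          e (Ideal.Quotient.mk _ (Ideal.Quotient.mk (I ^ 2) z))
            = Ideal.Quotient.mk ((I ^ 2) ⊔ JB) z :=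
      ⟨(DoubleQuot.quotQuotEquivQuotSupₐ V (I ^ 2) JB).toLinearEquiv,
        fun z => DoubleQuot.quotQuotEquivQuotSup_quotQuotMk (I ^ 2) JB z⟩
    obtain ⟨e6, He6⟩ : ∃ e : ((A ⊗[V] A) ⧸ ((I ^ 2) ⊔ JB)) ≃ₗ[V]
        ((A ⊗[V] A) ⧸ (JB ⊔ (I ^ 2))),
        ∀ (z : A ⊗[V] A),
          e (Ideal.Quotient.mk _ z) = Ideal.Quotient.mk _ z :=
      ⟨(Ideal.quotientEquivAlgOfEq V (sup_comm (I ^ 2) JB)).toLinearEquiv,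
        fun z => Ideal.quotientEquivAlgOfEq_mk V (sup_comm (I ^ 2) JB) z⟩
    obtain ⟨e7, He7⟩ : ∃ e : ((A ⊗[V] A) ⧸ (JB ⊔ (I ^ 2))) ≃ₗ[V]
        (((A ⊗[V] A) ⧸ JB) ⧸ ((I ^ 2).map (Ideal.Quotient.mkₐ V JB))),
        ∀ (z : A ⊗[V] A),
          e (Ideal.Quotient.mk _ z)
            = Ideal.Quotient.mk _ (Ideal.Quotient.mk JB z) :=
      ⟨(DoubleQuot.quotQuotEquivQuotSupₐ V JB (I ^ 2)).symm.toLinearEquiv,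
        fun z => by
          rw [AlgEquiv.toLinearEquiv_apply, DoubleQuot.coe_quotQuotEquivQuotSupₐ_symm]
          exact DoubleQuot.quotQuotEquivQuotSup_symm_quotQuotMk JB (I ^ 2) z⟩
    obtain ⟨e8, He8⟩ : ∃ e : (((A ⊗[V] A) ⧸ JB) ⧸
          ((I ^ 2).map (Ideal.Quotient.mkₐ V JB))) ≃ₗ[V]
        (((A ⊗[V] A) ⧸ JB) ⧸ (In ^ 2)),
        ∀ (w : (A ⊗[V] A) ⧸ JB),
          e (Ideal.Quotient.mk _ w) = Ideal.Quotient.mk (In ^ 2) w :=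
      ⟨(Ideal.quotientEquivAlgOfEq V hIn2').toLinearEquiv,
        fun w => Ideal.quotientEquivAlgOfEq_mk V hIn2' w⟩
    refine ⟨e1.trans <| e2.trans <| e3.trans <| e4.trans <| e5.trans <| e6.trans <|
      e7.trans e8, ?_⟩
    intro x v
    have hsm : (v • (Ideal.Quotient.mk (I ^ 2) x)) = Ideal.Quotient.mk (I ^ 2) (v • x) :=
      (map_smul (Ideal.Quotient.mkₐ V (I ^ 2)) v x).symm
    simp only [LinearEquiv.trans_apply, He1, hsm, He2, He3, He4, He5, He6, He7, He8]
  · -- Part 2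
    have hne : (π ^ (n + 1) : V) ≠ 0 := pow_ne_zero _ hπ.ne_zero
    have hregV : IsSMulRegular V (π ^ (n + 1)) := fun a b h =>
      mul_left_cancel₀ hne h
    have hregA : IsSMulRegular A (π ^ (n + 1)) :=
      ((TensorProduct.rid V A).isSMulRegular_congr (π ^ (n + 1))).mp
        (IsSMulRegular.lTensor A hregV)
    have hJBspan : JB = Ideal.span {algebraMap V (A ⊗[V] A) (π ^ (n + 1))} := by
      rw [hJB, hJ, Ideal.map_span, Set.image_singleton]
    have key : ∀ x : A ⊗[V] A, x ∈ I → Ideal.Quotient.mk JB x ∈ In ^ 2 →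
        ∃ y ∈ I ^ 2, ∃ b ∈ I, x = y + (π ^ (n + 1)) • b := by
      intro x hx hmem
      rw [hIn2] at hmem
      obtain ⟨y, hy, hyx⟩ := (Ideal.mem_map_iff_of_surjective _
        Ideal.Quotient.mk_surjective).mp hmem
      have hxy : x - y ∈ JB := by
        have h := Ideal.Quotient.eq.mp hyx
        simpa [neg_sub] using JB.neg_mem h
      rw [hJBspan, Ideal.mem_span_singleton'] at hxy
      obtain ⟨b, hb⟩ := hxy
      have hsb : (π ^ (n + 1)) • b = x - y := by
        rw [Algebra.smul_def, mul_comm]; exact hb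
      have hyI : y ∈ I := Ideal.pow_le_self two_ne_zero hy
      rw [hI, RingHom.mem_ker] at hx hyI
      have h2 : (Algebra.TensorProduct.lmul' V (S := A) : A ⊗[V] A →+* A)
          ((π ^ (n + 1)) • b) = 0 := by
        rw [hsb, map_sub, hx, hyI, sub_zero]
      have h3 : (π ^ (n + 1)) • ((Algebra.TensorProduct.lmul' V (S := A) :
          A ⊗[V] A →+* A) b) = 0 := by
        rw [← h2]
        exact (map_smul (Algebra.TensorProduct.lmul' V (S := A)) (π ^ (n + 1)) b).symm
      have hbI : b ∈ I := by
        rw [hI, RingHom.mem_ker]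
        exact hregA (h3.trans (smul_zero _).symm)
      exact ⟨y, hy, b, hbI, by rw [hsb]; ring⟩
    have hmemIn : ∀ z : A ⊗[V] A, z ∈ I → Ideal.Quotient.mk JB z ∈ In :=
      fun z hz => hIn ▸ Ideal.mem_map_of_mem _ hz
    have hsmulZero : ∀ r ∈ J, ∀ w : (A ⊗[V] A) ⧸ JB, r • w = 0 := by
      intro r hr w
      have h0 : (algebraMap V ((A ⊗[V] A) ⧸ JB)) r = 0 := by
        have hm : algebraMap V (A ⊗[V] A) r ∈ JB := hJB ▸ Ideal.mem_map_of_mem _ hr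
        rw [show (algebraMap V ((A ⊗[V] A) ⧸ JB)) r
            = Ideal.Quotient.mk JB (algebraMap V (A ⊗[V] A) r) from rfl,
          Ideal.Quotient.eq_zero_iff_mem]
        exact hm
      rw [← algebraMap_smul ((A ⊗[V] A) ⧸ JB) r w, h0]
      exact zero_mul w
    obtain ⟨φ, hφ⟩ : ∃ f : I →ₗ[V]
        (In ⧸ Submodule.comap
          (Submodule.subtype (In : Submodule ((A ⊗[V] A) ⧸ JB) ((A ⊗[V] A) ⧸ JB)))
          (In ^ 2 : Ideal ((A ⊗[V] A) ⧸ JB))),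
        ∀ (z : A ⊗[V] A) (hz : z ∈ I),
          f ⟨z, hz⟩ = Submodule.Quotient.mk ⟨Ideal.Quotient.mk JB z, hmemIn z hz⟩ := by
      refine ⟨{ toFun := fun xx => Submodule.Quotient.mk
                    (⟨Ideal.Quotient.mk JB (xx : A ⊗[V] A), hmemIn _ xx.2⟩ :
                      (In : Submodule ((A ⊗[V] A) ⧸ JB) ((A ⊗[V] A) ⧸ JB))),
                map_add' := ?_,
                map_smul' := ?_ }, fun z hz => rfl⟩
      case refine_1 =>
        intro a b
        rw [← Submodule.Quotient.mk_add]
        congr 1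
      case refine_2 =>
        intro v a
        rw [RingHom.id_apply, ← Submodule.Quotient.mk_smul]
        congr 1
    have hker1 : Submodule.restrictScalars V
        (Submodule.comap (Submodule.subtype (I : Submodule (A ⊗[V] A) (A ⊗[V] A)))
          (I ^ 2 : Ideal (A ⊗[V] A))) ≤ LinearMap.ker φ := by
      rintro ⟨z, hz⟩ h
      have hz2 : z ∈ I ^ 2 := h
      rw [LinearMap.mem_ker, hφ z hz, Submodule.Quotient.mk_eq_zero]
      show Ideal.Quotient.mk JB z ∈ In ^ 2
      rw [hIn2]
      exact Ideal.mem_map_of_mem _ hz2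
    obtain ⟨φbar, hφbar⟩ : ∃ f : (I ⧸ Submodule.comap
          (Submodule.subtype (I : Submodule (A ⊗[V] A) (A ⊗[V] A)))
          (I ^ 2 : Ideal (A ⊗[V] A))) →ₗ[V]
        (In ⧸ Submodule.comap
          (Submodule.subtype (In : Submodule ((A ⊗[V] A) ⧸ JB) ((A ⊗[V] A) ⧸ JB)))
          (In ^ 2 : Ideal ((A ⊗[V] A) ⧸ JB))),
        ∀ (xx : I), f (Submodule.Quotient.mk xx) = φ xx :=
      ⟨(Submodule.liftQ _ φ hker1).comp
        (Submodule.Quotient.restrictScalarsEquiv V _).symm.toLinearMap,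
        fun xx => by
          rw [LinearMap.comp_apply, LinearEquiv.coe_coe,
            Submodule.Quotient.restrictScalarsEquiv_symm_mk, Submodule.liftQ_apply]⟩
    have hker2 : (J • (⊤ : Submodule V (I ⧸ Submodule.comap
          (Submodule.subtype (I : Submodule (A ⊗[V] A) (A ⊗[V] A)))
          (I ^ 2 : Ideal (A ⊗[V] A)))))
        ≤ LinearMap.ker φbar := by
      refine Submodule.smul_le.mpr ?_
      intro r hr m _
      rw [LinearMap.mem_ker, map_smul]
      obtain ⟨u, hu⟩ := Submodule.Quotient.mk_surjective _ (φbar m)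
      rw [← hu, ← Submodule.Quotient.mk_smul]
      have hu : r • u = 0 := by
        refine Subtype.ext ?_
        rw [Submodule.coe_smul_of_tower]
        exact (hsmulZero r hr _).trans rfl
      rw [hu, Submodule.Quotient.mk_zero]
    obtain ⟨φ2, hφ2⟩ : ∃ f : ((I ⧸ Submodule.comap
          (Submodule.subtype (I : Submodule (A ⊗[V] A) (A ⊗[V] A)))
          (I ^ 2 : Ideal (A ⊗[V] A))) ⧸ (J • ⊤)) →ₗ[V]
        (In ⧸ Submodule.comap
          (Submodule.subtype (In : Submodule ((A ⊗[V] A) ⧸ JB) ((A ⊗[V] A) ⧸ JB)))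
          (In ^ 2 : Ideal ((A ⊗[V] A) ⧸ JB))),
        ∀ m, f (Submodule.Quotient.mk m) = φbar m :=
      ⟨Submodule.liftQ _ φbar hker2, fun m => Submodule.liftQ_apply _ _ _⟩
    have hsurj : Function.Surjective φ2 := by
      intro t
      obtain ⟨⟨z, hz⟩, rfl⟩ := Submodule.Quotient.mk_surjective _ t
      rw [hIn] at hz
      obtain ⟨x, hxI, hxz⟩ := (Ideal.mem_map_iff_of_surjective _
        Ideal.Quotient.mk_surjective).mp hz
      refine ⟨Submodule.Quotient.mk (Submodule.Quotient.mk ⟨x, hxI⟩), ?_⟩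
      rw [hφ2, hφbar, hφ x hxI]
      congr 1
      exact Subtype.ext hxz
    have hinj : Function.Injective φ2 := by
      apply LinearMap.ker_eq_bot.mp
      refine (Submodule.eq_bot_iff _).mpr ?_
      intro m hm
      obtain ⟨mm, rfl⟩ := Submodule.Quotient.mk_surjective _ m
      obtain ⟨⟨x, hx⟩, rfl⟩ := Submodule.Quotient.mk_surjective _ mm
      have hm0 := LinearMap.mem_ker.mp hm
      rw [hφ2, hφbar, hφ x hx] at hm0
      have hmem2 : Ideal.Quotient.mk JB x ∈ In ^ 2 := by
        have h := (Submodule.Quotient.mk_eq_zero _).mp hm0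
        exact h
      obtain ⟨y, hy, b, hb, hxyb⟩ := key x hx hmem2
      rw [Submodule.Quotient.mk_eq_zero]
      have hxdec : (⟨x, hx⟩ : I) = ⟨y, Ideal.pow_le_self two_ne_zero hy⟩
          + (π ^ (n + 1)) • ⟨b, hb⟩ := by
        refine Subtype.ext ?_
        show x = y + (π ^ (n + 1)) • b
        exact hxyb
      have hmky : Submodule.Quotient.mk (p := Submodule.comap
            (Submodule.subtype (I : Submodule (A ⊗[V] A) (A ⊗[V] A)))
            (I ^ 2 : Ideal (A ⊗[V] A)))
          (⟨y, Ideal.pow_le_self two_ne_zero hy⟩ : I) = 0 :=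
        (Submodule.Quotient.mk_eq_zero _).mpr hy
      have hrw : Submodule.Quotient.mk (p := Submodule.comap
            (Submodule.subtype (I : Submodule (A ⊗[V] A) (A ⊗[V] A)))
            (I ^ 2 : Ideal (A ⊗[V] A))) (⟨x, hx⟩ : I)
          = (π ^ (n + 1)) • Submodule.Quotient.mk (⟨b, hb⟩ : I) := by
        rw [hxdec, Submodule.Quotient.mk_add, hmky, zero_add,
          Submodule.Quotient.mk_smul]
      rw [hrw]
      exact Submodule.smul_mem_smul (hJ ▸ Ideal.mem_span_singleton_self _)
        Submodule.mem_top
    have hbij : Function.Bijective φ2 := ⟨hinj, hsurj⟩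
    refine ⟨(tensorQuotEquivQuotSMul _ J).trans
      (LinearEquiv.ofBijective φ2 hbij), ?_⟩
    intro x hx v
    rw [LinearEquiv.trans_apply, tensorQuotEquivQuotSMul_tmul_mk,
      LinearEquiv.ofBijective_apply, ← Submodule.Quotient.mk_smul, hφ2, hφbar]
    have hvx : v • (⟨x, hx⟩ : I) = ⟨v • x, I.smul_of_tower_mem v hx⟩ := rfl
    rw [hvx, hφ]
end

section
/- Let R be a commutative ring and A = R[x₁,…,xₙ,y₁,…,yₘ]/(f₁,…,fₘ) a quotient of a polynomial ring such that the Jacobian determinant det(∂f_i/∂y_j) is a unit in A. Then the module of Kähler differentials Ω¹_{A/R} is a free A-module with basis dx₁,…,dxₙ. -/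
open MvPolynomial

universe w'
set_option maxHeartbeats 1000000
set_option synthInstance.maxHeartbeats 200000

namespace KaehlerJacAux

section MatrixLemmas

variable {A : Type*} [CommRing A] {n m : ℕ}
variable {N : Type*} [AddCommGroup N] [Module A N]

private lemma sum_smul_sum_eq (c : Fin m → A) (M : Matrix (Fin m) (Fin n) A) (u : Fin n → N) :
    ∑ j, c j • (∑ i, M j i • u i) = ∑ i, (∑ j, c j * M j i) • u i := by
  simp_rw [Finset.smul_sum, smul_smul]
  rw [Finset.sum_comm]
  simp_rw [Finset.sum_smul]

lemma aux_rel (J : Matrix (Fin m) (Fin m) A) (J' : Matrix (Fin m) (Fin m) A)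
    (hJJ' : J * J' = 1) (Jx : Matrix (Fin m) (Fin n) A) (u : Fin n → N) (r : Fin m) :
    (∑ i, Jx r i • u i) + (∑ j, J r j • (∑ i, (-(J' * Jx)) j i • u i)) = 0 := by
  rw [sum_smul_sum_eq]
  have h : ∀ i, (∑ j, J r j * (-(J' * Jx)) j i) = - Jx r i := by
    intro i
    have : (J * (-(J' * Jx))) r i = - Jx r i := by
      rw [Matrix.mul_neg, ← Matrix.mul_assoc, hJJ', Matrix.one_mul, Matrix.neg_apply]
    rw [← this, Matrix.mul_apply]
  simp_rw [h, neg_smul]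
  rw [← Finset.sum_add_distrib]
  simp

lemma aux_solve (J : Matrix (Fin m) (Fin m) A) (J' : Matrix (Fin m) (Fin m) A)
    (hJ'J : J' * J = 1) (Jx : Matrix (Fin m) (Fin n) A) (u : Fin n → N) (v : Fin m → N)
    (hr : ∀ r, (∑ i, Jx r i • u i) + (∑ j, J r j • v j) = 0) (j : Fin m) :
    v j = ∑ i, (-(J' * Jx)) j i • u i := by
  have h2 : ∀ r, (∑ l, J r l • v l) = - ∑ i, Jx r i • u i := by
    intro r
    exact eq_neg_of_add_eq_zero_left (by rw [add_comm]; exact hr r)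
  calc v j = ∑ l, ((J' * J) j l) • v l := by
        rw [hJ'J]
        simp [Matrix.one_apply, ite_smul]
    _ = ∑ r, J' j r • (∑ l, J r l • v l) := by
        simp_rw [Matrix.mul_apply]
        rw [sum_smul_sum_eq]
    _ = ∑ r, J' j r • (- ∑ i, Jx r i • u i) := by simp_rw [h2]
    _ = - ∑ r, J' j r • (∑ i, Jx r i • u i) := by
        simp_rw [smul_neg]
        rw [Finset.sum_neg_distrib]
    _ = - ∑ i, ((J' * Jx) j i) • u i := by
        rw [sum_smul_sum_eq]
        simp_rw [Matrix.mul_apply]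
    _ = ∑ i, (-(J' * Jx)) j i • u i := by
        simp_rw [Matrix.neg_apply, neg_smul]
        rw [Finset.sum_neg_distrib]

end MatrixLemmas

section Presentation

variable {R : Type*} [CommRing R] {n m : ℕ}
variable (I : Ideal (MvPolynomial (Fin n ⊕ Fin m) R))

lemma aeval_mk_X (p : MvPolynomial (Fin n ⊕ Fin m) R) :
    aeval (fun v : Fin n ⊕ Fin m => Ideal.Quotient.mk I (X v)) p = Ideal.Quotient.mk I p := by
  have : (aeval (fun v : Fin n ⊕ Fin m => Ideal.Quotient.mk I (X v)) :
      MvPolynomial (Fin n ⊕ Fin m) R →ₐ[R] _) = Ideal.Quotient.mkₐ R I := by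
    apply MvPolynomial.algHom_ext
    intro v
    simp
  rw [this]
  rfl

/-- generators of the quotient ring -/
noncomputable def gens : Algebra.Generators R (MvPolynomial (Fin n ⊕ Fin m) R ⧸ I) (Fin n ⊕ Fin m) :=
  Algebra.Generators.ofSurjective (fun v => Ideal.Quotient.mk I (X v)) (by
    intro x
    obtain ⟨p, rfl⟩ := Ideal.Quotient.mk_surjective x
    exact ⟨p, aeval_mk_X I p⟩)

lemma gens_algebraMap (p : MvPolynomial (Fin n ⊕ Fin m) R) :
    algebraMap (gens I).Ring (MvPolynomial (Fin n ⊕ Fin m) R ⧸ I) p = Ideal.Quotient.mk I p := by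
  rw [Algebra.Generators.algebraMap_apply]
  exact aeval_mk_X I p

variable (f : Fin m → MvPolynomial (Fin n ⊕ Fin m) R) (hI : I = Ideal.span (Set.range f))

/-- the presentation of the quotient ring -/
noncomputable def pres : Algebra.Presentation R (MvPolynomial (Fin n ⊕ Fin m) R ⧸ I)
    (Fin n ⊕ Fin m) (Fin m) where
  toGenerators := gens I
  relation := f
  span_range_relation_eq_ker := by
    have h : (gens I).ker = I := by
      rw [Algebra.Generators.ker_eq_ker_aeval_val]
      ext p
      rw [RingHom.mem_ker]
      show aeval (fun v : Fin n ⊕ Fin m => Ideal.Quotient.mk I (X v)) p = 0 ↔ p ∈ I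
      rw [aeval_mk_X I p, Ideal.Quotient.eq_zero_iff_mem]
    rw [h, hI]

lemma relation_apply (r : Fin m) (v : Fin n ⊕ Fin m) :
    ((pres I f hI).differentialsRelations.relation r) v
      = Ideal.Quotient.mk I (pderiv v (f r)) := by
  show (Finsupp.mapRange (algebraMap (gens I).Ring _) (map_zero _)
      ((KaehlerDifferential.mvPolynomialBasis R _).repr
        (KaehlerDifferential.D _ _ (f r)))) v = _
  rw [Finsupp.mapRange_apply, KaehlerDifferential.mvPolynomialBasis_repr_apply]
  exact gens_algebraMap I _

lemma lc_relation {N : Type w'} [AddCommGroup N]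
    [Module (MvPolynomial (Fin n ⊕ Fin m) R ⧸ I) N]
    (var : (pres I f hI).differentialsRelations.G → N) (r : Fin m) :
    Finsupp.linearCombination _ var ((pres I f hI).differentialsRelations.relation r) =
      (∑ i, Ideal.Quotient.mk I (pderiv (Sum.inl i) (f r)) • var (Sum.inl i)) +
        ∑ j, Ideal.Quotient.mk I (pderiv (Sum.inr j) (f r)) • var (Sum.inr j) := by
  letI : Fintype ((pres I f hI).differentialsRelations.G) :=
    inferInstanceAs (Fintype (Fin n ⊕ Fin m))
  rw [Finsupp.linearCombination_apply, Finsupp.sum_fintype]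
  · show (∑ v : Fin n ⊕ Fin m,
        ((pres I f hI).differentialsRelations.relation r) v • var v) = _
    rw [Fintype.sum_sum_type]
    simp_rw [relation_apply]
  · intro v
    exact zero_smul (MvPolynomial (Fin n ⊕ Fin m) R ⧸ I) (var v)

end Presentation

section Solution

variable {R : Type*} [CommRing R] {n m : ℕ}
variable (I : Ideal (MvPolynomial (Fin n ⊕ Fin m) R))
variable (f : Fin m → MvPolynomial (Fin n ⊕ Fin m) R)

/-- Jacobian in the y variables -/
noncomputable def Jm : Matrix (Fin m) (Fin m) (MvPolynomial (Fin n ⊕ Fin m) R ⧸ I) :=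
  Matrix.of fun i j => Ideal.Quotient.mk I (pderiv (Sum.inr j) (f i))

/-- Jacobian in the x variables -/
noncomputable def Jx : Matrix (Fin m) (Fin n) (MvPolynomial (Fin n ⊕ Fin m) R ⧸ I) :=
  Matrix.of fun r i => Ideal.Quotient.mk I (pderiv (Sum.inl i) (f r))

/-- the expression of dy in terms of dx -/
noncomputable def W : Matrix (Fin m) (Fin n) (MvPolynomial (Fin n ⊕ Fin m) R ⧸ I) :=
  -((Jm I f)⁻¹ * Jx I f)

lemma symm_eq_sum_single {A : Type*} [CommRing A] (w : Fin n → A) :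
    Finsupp.equivFunOnFinite.symm w = ∑ i, w i • Finsupp.single i (1 : A) := by
  ext i'
  simp [Finsupp.single_apply]

variable (hI : I = Ideal.span (Set.range f))

/-- the solution in the free module -/
noncomputable def sol (hJac : IsUnit (Matrix.det (Matrix.of fun i j : Fin m =>
      Ideal.Quotient.mk I (pderiv (Sum.inr j) (f i))))) :
    (pres I f hI).differentialsRelations.Solution
      (Fin n →₀ (MvPolynomial (Fin n ⊕ Fin m) R ⧸ I)) where
  var := Sum.elim (fun i => Finsupp.single i 1)
    (fun j => Finsupp.equivFunOnFinite.symm (W I f j))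
  linearCombination_var_relation r := by
    refine (lc_relation I f hI _ r).trans ?_
    show (∑ i, (Jx I f) r i •
          (Finsupp.single i 1 : Fin n →₀ (MvPolynomial (Fin n ⊕ Fin m) R ⧸ I))) +
        (∑ j, (Jm I f) r j • Finsupp.equivFunOnFinite.symm (W I f j)) = 0
    simp_rw [symm_eq_sum_single]
    exact aux_rel (Jm I f) (Jm I f)⁻¹ (Matrix.mul_nonsing_inv _ hJac) (Jx I f) _ r

variable (hJac : IsUnit (Matrix.det (Matrix.of fun i j : Fin m =>
      Ideal.Quotient.mk I (pderiv (Sum.inr j) (f i)))))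

lemma sol_var_inl (i : Fin n) :
    (sol I f hI hJac).var (Sum.inl i) = Finsupp.single i 1 := rfl

lemma sol_var_inr (j : Fin m) :
    (sol I f hI hJac).var (Sum.inr j) = Finsupp.equivFunOnFinite.symm (W I f j) := rfl

/-- the universal property -/
noncomputable def core (hJac : IsUnit (Matrix.det (Matrix.of fun i j : Fin m =>
      Ideal.Quotient.mk I (pderiv (Sum.inr j) (f i))))) :
    Module.Relations.Solution.IsPresentationCore.{w'} (sol I f hI hJac) where
  desc {N} _ _ s := Finsupp.linearCombination _ (fun i => s.var (Sum.inl i))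
  postcomp_desc {N} _ _ s := by
    ext g
    show Finsupp.linearCombination _ (fun i => s.var (Sum.inl i))
      ((sol I f hI hJac).var g) = s.var g
    have hkey : ∀ j : Fin m, s.var (Sum.inr j) = ∑ i, W I f j i • s.var (Sum.inl i) := by
      intro j
      exact aux_solve (Jm I f) (Jm I f)⁻¹ (Matrix.nonsing_inv_mul _ hJac) (Jx I f)
        (fun i => s.var (Sum.inl i)) (fun j => s.var (Sum.inr j))
        (fun r => by
          have h := s.linearCombination_var_relation r
          rw [lc_relation] at h
          exact h) j
    match g with
    | Sum.inl i => rw [sol_var_inl]; simp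
    | Sum.inr j =>
      rw [sol_var_inr, symm_eq_sum_single, map_sum, hkey j]
      simp
  postcomp_injective {N} _ _ {φ φ'} h := by
    apply Finsupp.lhom_ext
    intro a b
    have hb : (Finsupp.single a b : Fin n →₀ _) = b • Finsupp.single a 1 := by
      rw [Finsupp.smul_single, smul_eq_mul, mul_one]
    have hv := Module.Relations.Solution.congr_var h (Sum.inl a)
    change φ (Finsupp.single a 1) = φ' (Finsupp.single a 1) at hv
    rw [hb, map_smul, map_smul, hv]

lemma sol_isPresentation (hJac : IsUnit (Matrix.det (Matrix.of fun i j : Fin m =>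
      Ideal.Quotient.mk I (pderiv (Sum.inr j) (f i))))) :
    (sol I f hI hJac).IsPresentation :=
  (core I f hI hJac).isPresentation

end Solution

end KaehlerJacAux

/-- If `A = R[x₁,…,xₙ,y₁,…,yₘ]/(f₁,…,fₘ)` with the Jacobian `det(∂fᵢ/∂yⱼ)` a unit in `A`,
then `Ω¹_{A/R}` is a free `A`-module with basis `dx₁,…,dxₙ`. -/
theorem kaehler_free_of_jacobian_unit
    {R : Type*} [CommRing R] (n m : ℕ) (f : Fin m → MvPolynomial (Fin n ⊕ Fin m) R)
    (I : Ideal (MvPolynomial (Fin n ⊕ Fin m) R)) (hI : I = Ideal.span (Set.range f))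
    (hJac : IsUnit (Matrix.det (Matrix.of fun i j : Fin m =>
      Ideal.Quotient.mk I (pderiv (Sum.inr j) (f i))))) :
    ∃ b : Module.Basis (Fin n) (MvPolynomial (Fin n ⊕ Fin m) R ⧸ I)
        (KaehlerDifferential R (MvPolynomial (Fin n ⊕ Fin m) R ⧸ I)),
      ∀ i : Fin n, b i = KaehlerDifferential.D R (MvPolynomial (Fin n ⊕ Fin m) R ⧸ I)
        (Ideal.Quotient.mk I (X (Sum.inl i))) := by
  classical
  have h1 := KaehlerJacAux.sol_isPresentation I f hI hJac
  have h2 := (KaehlerJacAux.pres I f hI).differentialsSolution_isPresentation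
  let e := Module.Relations.Solution.IsPresentation.uniq h1 h2
  refine ⟨Finsupp.basisSingleOne.map e, fun i => ?_⟩
  rw [Module.Basis.map_apply, Finsupp.coe_basisSingleOne]
  have hv : (Finsupp.single i 1 : Fin n →₀ (MvPolynomial (Fin n ⊕ Fin m) R ⧸ I)) =
      (KaehlerJacAux.sol I f hI hJac).var (Sum.inl i) :=
    (KaehlerJacAux.sol_var_inl I f hI hJac i).symm
  show e (Finsupp.single i 1) = _
  rw [hv, Module.Relations.Solution.IsPresentation.uniq_var h1 h2 (Sum.inl i)]
  rfl
end

section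
/- Let K be a field. The K-algebra homomorphism K[[t]] ⊗_K K[[s]] → K[[t]][[τ]] determined by t ↦ t and s ↦ t + τ (i.e. sending f(t) ⊗ g(s) to f(t)·g(t+τ)) is injective. -/
open TensorProduct PowerSeries
set_option synthInstance.maxHeartbeats 1000000
set_option maxHeartbeats 1000000

variable (K : Type*) [Field K]

/-- The `K`-linear substitution map `g(s) ↦ g(t + τ)` from `K[[s]]` to `K[[t]][[τ]]`:
if `g = ∑ a_n s^n` then the coefficient of `τ^j` in `g(t+τ)` is
`∑_i ((i+j).choose j) a_{i+j} t^i`. -/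
noncomputable def substShift : PowerSeries K →ₗ[K] PowerSeries (PowerSeries K) where
  toFun g := PowerSeries.mk fun j => PowerSeries.mk fun i =>
    ((i + j).choose j : K) * PowerSeries.coeff (i + j) g
  map_add' g h := by
    ext j
    simp [PowerSeries.coeff_mk, mul_add]
  map_smul' c g := by
    ext j
    simp [PowerSeries.coeff_mk, mul_left_comm, smul_eq_mul]

/-- Triangle sum swap. -/
lemma sum_triangle_comm {M : Type*} [AddCommMonoid M] (n : ℕ) (F : ℕ → ℕ → M) :
    ∑ j ∈ Finset.range (n+1), ∑ p ∈ Finset.range (n+1-j), F j p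
      = ∑ p ∈ Finset.range (n+1), ∑ j ∈ Finset.range (n+1-p), F j p := by
  rw [Finset.sum_sigma', Finset.sum_sigma']
  apply Finset.sum_nbij' (fun x => ⟨x.2, x.1⟩) (fun x => ⟨x.2, x.1⟩) <;>
    (intros a ha; simp only [Finset.mem_sigma, Finset.mem_range] at * <;> omega)

/-- The alternating binomial sum identity over ℤ. -/
lemma comb_int (N b : ℕ) :
    ∑ j ∈ Finset.range (N+1),
        (-1 : ℤ)^j * ((j+b).choose b) * ((N+b).choose (j+b))
      = if N = 0 then 1 else 0 := by
  have h : ∀ j ∈ Finset.range (N+1),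
      (-1 : ℤ)^j * ((j+b).choose b) * ((N+b).choose (j+b))
        = ((N+b).choose b : ℤ) * ((-1)^j * (N.choose j)) := by
    intro j hj
    rw [Finset.mem_range] at hj
    have h1 : j + b ≤ N + b := by omega
    have h2 : b ≤ j + b := by omega
    have := Nat.choose_mul (n := N + b) h2
    simp only [Nat.add_sub_cancel] at this
    have := congrArg (fun x : ℕ => (x : ℤ)) this
    push_cast at this
    linear_combination (-1 : ℤ)^j * this
  rw [Finset.sum_congr rfl h, ← Finset.mul_sum, Int.alternating_sum_range_choose]
  split
  · next h0 => subst h0; simp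
  · simp

lemma comb_field (N b : ℕ) :
    ∑ j ∈ Finset.range (N+1),
        (-1 : K)^j * ((j+b).choose b : K) * ((N+b).choose (j+b) : K)
      = if N = 0 then 1 else 0 := by
  have := congrArg (fun x : ℤ => (x : K)) (comb_int N b)
  push_cast at this
  rw [this]

/-- The `K`-linear map extracting (coefficient of `s^b` of `F(t, s - t)`):
`L_b F = ∑_a (∑_{j ≤ a} (-1)^j ((j+b).choose b) (coeff_{a-j} (coeff_{j+b} F))) t^a`. -/
noncomputable def Lb (b : ℕ) : PowerSeries (PowerSeries K) →ₗ[K] PowerSeries K where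
  toFun F := PowerSeries.mk fun a => ∑ j ∈ Finset.range (a+1),
    (-1 : K)^j * ((j+b).choose b : K) *
      PowerSeries.coeff (a-j) (PowerSeries.coeff (j+b) F)
  map_add' F G := by
    ext a
    simp [PowerSeries.coeff_mk, mul_add, Finset.sum_add_distrib]
  map_smul' c F := by
    ext a
    simp [PowerSeries.coeff_mk, PowerSeries.coeff_smul, smul_eq_mul, Finset.mul_sum,
      mul_left_comm]

lemma Lb_key (b : ℕ) (f g : PowerSeries K) :
    Lb K b (PowerSeries.C f * substShift K g)
      = PowerSeries.coeff b g • f := by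
  ext a
  rw [Lb]
  simp only [LinearMap.coe_mk, AddHom.coe_mk, PowerSeries.coeff_mk]
  have step1 : ∀ j ∈ Finset.range (a+1),
      (-1 : K)^j * ((j+b).choose b : K) *
        PowerSeries.coeff (a-j)
          (PowerSeries.coeff (j+b)
            (PowerSeries.C f * substShift K g))
        = ∑ p ∈ Finset.range (a+1-j),
            (-1 : K)^j * ((j+b).choose b : K) *
              (PowerSeries.coeff p f *
                (((a-p+b).choose (j+b) : K) * PowerSeries.coeff (a-p+b) g)) := by
    intro j hj
    rw [Finset.mem_range] at hj
    rw [PowerSeries.coeff_C_mul]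
    rw [substShift]
    simp only [LinearMap.coe_mk, AddHom.coe_mk, PowerSeries.coeff_mk]
    rw [PowerSeries.coeff_mul, Finset.Nat.sum_antidiagonal_eq_sum_range_succ_mk,
      Finset.mul_sum]
    have hsub : (a - j).succ = a + 1 - j := by omega
    rw [hsub]
    apply Finset.sum_congr rfl
    intro p hp
    rw [Finset.mem_range] at hp
    simp only [PowerSeries.coeff_mk]
    have h1 : a - j - p + (j + b) = a - p + b := by omega
    rw [h1]
  rw [Finset.sum_congr rfl step1, sum_triangle_comm]
  have step2 : ∀ p ∈ Finset.range (a+1),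
      (∑ j ∈ Finset.range (a+1-p),
          (-1 : K)^j * ((j+b).choose b : K) *
            (PowerSeries.coeff p f *
              (((a-p+b).choose (j+b) : K) * PowerSeries.coeff (a-p+b) g)))
        = (PowerSeries.coeff p f * PowerSeries.coeff (a-p+b) g) *
            (if a - p = 0 then 1 else 0) := by
    intro p hp
    rw [Finset.mem_range] at hp
    have hsub : a + 1 - p = (a - p) + 1 := by omega
    rw [hsub, ← comb_field K (a-p) b, Finset.mul_sum]
    apply Finset.sum_congr rfl
    intro j _
    ring
  rw [Finset.sum_congr rfl step2]
  rw [Finset.sum_eq_single a]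
  · simp [PowerSeries.coeff_smul, smul_eq_mul, mul_comm]
  · intro p hp hpa
    rw [Finset.mem_range] at hp
    have : a - p ≠ 0 := by omega
    simp [this]
  · intro h
    exact absurd (Finset.self_mem_range_succ a) h

/-- The `K`-algebra homomorphism `K[[t]] ⊗_K K[[s]] → K[[t]][[τ]]` determined by
`t ↦ t` and `s ↦ t + τ`, i.e. sending `f(t) ⊗ g(s)` to `f(t) · g(t+τ)`, is
injective. -/
theorem taylorMap_injective :
    ∃ Φ : (PowerSeries K ⊗[K] PowerSeries K) →ₗ[K] PowerSeries (PowerSeries K),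
      (∀ f g : PowerSeries K,
        Φ (f ⊗ₜ[K] g) = (PowerSeries.C f) * substShift K g) ∧
      Function.Injective Φ := by
  classical
  -- the bilinear map
  have hCsmul : ∀ (c : K) (f : PowerSeries K),
      PowerSeries.C (c • f) = c • PowerSeries.C f := by
    intro c f
    ext n
    simp only [PowerSeries.coeff_C, PowerSeries.coeff_smul]
    split <;> simp
  let B : PowerSeries K →ₗ[K] PowerSeries K →ₗ[K] PowerSeries (PowerSeries K) :=
    LinearMap.mk₂ K (fun f g => (PowerSeries.C f) * substShift K g)
      (fun f₁ f₂ g => by beta_reduce; rw [map_add, add_mul])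
      (fun c f g => by beta_reduce; rw [hCsmul, smul_mul_assoc])
      (fun f g₁ g₂ => by beta_reduce; rw [map_add, mul_add])
      (fun c f g => by beta_reduce; rw [map_smul, mul_smul_comm])
  refine ⟨TensorProduct.lift B, fun f g => rfl, ?_⟩
  -- injectivity
  rw [injective_iff_map_eq_zero]
  intro x hx
  -- choose a basis of K[[t]]
  let ℬ := Module.Free.chooseBasis K (PowerSeries K)
  set ι := Module.Free.ChooseBasisIndex K (PowerSeries K)
  -- the equivalence K[[t]] ⊗ K[[s]] ≃ (ι →₀ K[[s]])
  let e : (PowerSeries K ⊗[K] PowerSeries K) ≃ₗ[K] (ι →₀ PowerSeries K) :=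
    (TensorProduct.congr ℬ.repr (LinearEquiv.refl K (PowerSeries K))).trans
      (TensorProduct.finsuppScalarLeft K (PowerSeries K) ι)
  -- key compatibility: for all i b, ℬ.repr (Lb b (Φ x)) i = coeff b ((e x) i)
  have key : ∀ (b : ℕ) (i : ι),
      (ℬ.repr (Lb K b (TensorProduct.lift B x))) i
        = PowerSeries.coeff b ((e x) i) := by
    intro b i
    have hlin : ∀ (y : PowerSeries K ⊗[K] PowerSeries K),
        (ℬ.repr (Lb K b (TensorProduct.lift B y))) i
          = PowerSeries.coeff b ((e y) i) := by
      intro y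
      induction y using TensorProduct.induction_on with
      | zero => simp
      | tmul f g =>
        have h1 : TensorProduct.lift B (f ⊗ₜ[K] g)
            = (PowerSeries.C f) * substShift K g := rfl
        rw [h1, Lb_key]
        have h2 : e (f ⊗ₜ[K] g)
            = TensorProduct.finsuppScalarLeft K (PowerSeries K) ι ((ℬ.repr f) ⊗ₜ[K] g) := by
          simp [e, TensorProduct.congr_tmul]
        rw [h2]
        rw [TensorProduct.finsuppScalarLeft_apply_tmul_apply]
        simp [smul_eq_mul, mul_comm]
      | add y z hy hz =>
        simp only [map_add, Finsupp.add_apply, hy, hz]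
    exact hlin x
  have hex : e x = 0 := by
    ext i b
    have := key b i
    rw [hx] at this
    simp only [map_zero, Finsupp.coe_zero, Pi.zero_apply] at this ⊢
    exact this.symm
  have := congrArg e.symm hex
  simpa using this
end

section
/- Let V be a finite-dimensional vector space over a field of characteristic zero, N : V → V nilpotent with monodromy filtration M_•, and let V^∨ be the dual space with nilpotent endomorphism N^∨ (the transpose of N). Then the monodromy filtration M'_• of N^∨ on V^∨ is given by M'_i = (M_{-i-1})^⊥, the annihilator of M_{-i-1} in V^∨. -/
/-- `M` is a monodromy filtration for the nilpotent endomorphism `N`. -/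
def IsMonodromyFiltration {K V : Type*} [Field K] [AddCommGroup V] [Module K V]
    (N : V →ₗ[K] V) (M : ℤ → Submodule K V) : Prop :=
  Monotone M ∧ (∃ a : ℤ, M a = ⊥) ∧ (∃ b : ℤ, M b = ⊤) ∧
  (∀ i : ℤ, (M i).map N ≤ M (i - 2)) ∧
  (∀ k : ℕ, ((M (k : ℤ)).map (N ^ k) ⊔ M (-(k : ℤ) - 1) = M (-(k : ℤ)))) ∧
  (∀ k : ℕ, ∀ x ∈ M (k : ℤ), (N ^ k) x ∈ M (-(k : ℤ) - 1) → x ∈ M ((k : ℤ) - 1))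

/-- The transpose of a power is the power of the transpose. -/
lemma transpose_pow_aux {K V : Type*} [Field K] [AddCommGroup V] [Module K V]
    (N : V →ₗ[K] V) (k : ℕ) :
    (Module.Dual.transpose (R := K) N : Module.Dual K V →ₗ[K] Module.Dual K V) ^ k
      = (N ^ k).dualMap := by
  induction k with
  | zero => rfl
  | succ n ih =>
    rw [pow_succ, ih]
    ext f x
    simp [LinearMap.dualMap_apply, pow_succ', Module.Dual.transpose_apply]

/-- Image of a dual annihilator under a dual map, for vector spaces. -/
lemma map_dualMap_dualAnnihilator {K V : Type*} [Field K] [AddCommGroup V] [Module K V]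
    (u : V →ₗ[K] V) (W : Submodule K V) :
    (W.dualAnnihilator).map u.dualMap = (W.comap u).dualAnnihilator := by
  have h1 : W.dualAnnihilator = LinearMap.range (W.mkQ).dualMap := by
    rw [LinearMap.range_dualMap_eq_dualAnnihilator_ker, Submodule.ker_mkQ]
  have h2 : LinearMap.ker ((W.mkQ).comp u) = W.comap u := by
    rw [LinearMap.ker_comp, Submodule.ker_mkQ]
  rw [h1, ← LinearMap.range_comp, LinearMap.dualMap_comp_dualMap,
    LinearMap.range_dualMap_eq_dualAnnihilator_ker, h2]

/-- The monodromy filtration of the transpose `N^∨` on the dual space is given by the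
annihilators `M'_i = (M_{-i-1})^⊥` of the monodromy filtration `M` of `N`. -/
theorem monodromyFiltration_dual
    {K V : Type*} [Field K] [CharZero K] [AddCommGroup V] [Module K V]
    [FiniteDimensional K V] (N : V →ₗ[K] V) (hN : IsNilpotent N)
    (M : ℤ → Submodule K V) (hM : IsMonodromyFiltration N M) :
    IsMonodromyFiltration (Module.Dual.transpose (R := K) N : Module.Dual K V →ₗ[K] Module.Dual K V)
      (fun i : ℤ => Submodule.dualAnnihilator (M (-i - 1))) := by
  obtain ⟨mono, ⟨a, ha⟩, ⟨b, hb⟩, h4, h5, h6⟩ := hM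
  -- iterated version of condition 4
  have h4' : ∀ (k : ℕ) (j : ℤ), (M j).map (N ^ k) ≤ M (j - 2 * k) := by
    intro k
    induction k with
    | zero => intro j; simp [pow_zero, Module.End.one_eq_id, Submodule.map_id]
    | succ n ih =>
      intro j
      have : N ^ (n + 1) = N.comp (N ^ n) := by rw [pow_succ']; rfl
      rw [this, Submodule.map_comp]
      calc ((M j).map (N ^ n)).map N ≤ (M (j - 2 * n)).map N :=
            Submodule.map_mono (ih j)
        _ ≤ M (j - 2 * n - 2) := h4 _
        _ = M (j - 2 * (n + 1)) := by ring_nf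
  -- the key identity: M (k-1) = M k ⊓ (N^k)⁻¹ (M (-k-1))
  have key : ∀ k : ℕ, M ((k : ℤ) - 1) = M (k : ℤ) ⊓ (M (-(k : ℤ) - 1)).comap (N ^ k) := by
    intro k
    apply le_antisymm
    · refine le_inf (mono (by omega)) ?_
      rw [← Submodule.map_le_iff_le_comap]
      calc (M ((k : ℤ) - 1)).map (N ^ k) ≤ M ((k : ℤ) - 1 - 2 * k) := h4' k _
        _ ≤ M (-(k : ℤ) - 1) := mono (by omega)
    · rintro x ⟨hx1, hx2⟩
      exact h6 k x hx1 hx2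
  refine ⟨?_, ⟨-b - 1, ?_⟩, ⟨-a - 1, ?_⟩, ?_, ?_, ?_⟩
  · intro i j hij
    exact Submodule.dualAnnihilator_anti (mono (by omega))
  · simp only
    rw [show -(-b - 1) - 1 = b by ring, hb, Submodule.dualAnnihilator_top]
  · simp only
    rw [show -(-a - 1) - 1 = a by ring, ha, Submodule.dualAnnihilator_bot]
  · intro i
    simp only
    rintro f ⟨g, hg, rfl⟩
    rw [Submodule.mem_dualAnnihilator]
    intro x hx
    have hNx : N x ∈ M (-i - 1) := by
      have := h4 (-(i - 2) - 1) (Submodule.mem_map_of_mem hx)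
      rw [show -(i - 2) - 1 - 2 = -i - 1 by ring] at this
      exact this
    simpa [Module.Dual.transpose_apply] using (Submodule.mem_dualAnnihilator _).mp hg (N x) hNx
  · intro k
    simp only
    rw [transpose_pow_aux, map_dualMap_dualAnnihilator,
      show -(-(k : ℤ) - 1) - 1 = (k : ℤ) by ring,
      show -(-(k : ℤ)) - 1 = (k : ℤ) - 1 by ring,
      ← Subspace.dualAnnihilator_inf_eq, inf_comm, ← key]
  · intro k f hf hNf
    simp only [show -((k : ℤ) - 1) - 1 = -(k : ℤ) by ring] at *
    rw [show -(-(k : ℤ) - 1) - 1 = (k : ℤ) by ring] at hNf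
    rw [Submodule.mem_dualAnnihilator]
    intro y hy
    rw [← h5 k, Submodule.mem_sup] at hy
    obtain ⟨u, hu, z, hz, rfl⟩ := hy
    obtain ⟨x, hx, rfl⟩ := hu
    have e1 : f ((N ^ k) x) = 0 := by
      have := (Submodule.mem_dualAnnihilator _).mp hNf x hx
      rwa [transpose_pow_aux] at this
    have e2 : f z = 0 := (Submodule.mem_dualAnnihilator _).mp hf z hz
    simp [e1, e2]
end
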